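/- arXiv:1905.10274 — 4 statements merged into one kernel-verified Lean document; each statement's English description precedes it below -/
import Mathlib

section
/- For every ν < 0 and every real x, the Turán-type strict inequality D_{ν−1}(x)² < ((ν−1)/ν) · D_ν(x) · D_{ν−2}(x) holds. -/
open MeasureTheory Real Filter

noncomputable def G (ν x : ℝ) : ℝ :=
  ∫ t in Set.Ioi (0:ℝ), t ^ (-ν - 1) * Real.exp (-t^2/2 - x*t)

noncomputable def D (ν x : ℝ) : ℝ :=
  Real.exp (-x^2/4) / Real.Gamma (-ν) * G ν x

/-! Writing `w t = t ^ (-ν - 1) * exp (-t ^ 2 / 2 - x * t)` on `(0, ∞)`, the numbers `G (ν - k) x`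
are the moments `∫ t ^ k * w t`, so `G (ν - 1) x ^ 2 < G ν x * G (ν - 2) x` is the strict
Cauchy–Schwarz inequality for the positive weight `w`: the variance `∫ (t - c) ^ 2 * w t` with
`c = G (ν - 1) x / G ν x` is positive. The recursions `Γ(1 - ν) = -ν Γ(-ν)` and
`Γ(2 - ν) = (1 - ν)(-ν) Γ(-ν)` turn the factor `(ν - 1) / ν` into exactly the ratio of the
normalisations of the `D`s. -/

open Set

lemma integral_pos_of_ae_pos {α : Type*} [MeasurableSpace α] {μ : Measure α} [NeZero μ]
    {g : α → ℝ} (hg : Integrable g μ) (hpos : ∀ᵐ t ∂μ, 0 < g t) : 0 < ∫ t, g t ∂μ := by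
  rw [integral_pos_iff_support_of_nonneg_ae (hpos.mono fun _ h => h.le) hg]
  exact (Measure.measure_univ_pos.mpr (NeZero.ne μ)).trans_le
    (measure_mono_ae (hpos.mono fun _ ht _ => ht.ne'))

theorem sq_setIntegral_mul_lt {μ : Measure ℝ} [NullSingletonClass μ] {s : Set ℝ} {f : ℝ → ℝ}
    (hs : MeasurableSet s) (hμs : μ s ≠ 0) (hf : ∀ t ∈ s, 0 < f t)
    (h0 : IntegrableOn f s μ) (h1 : IntegrableOn (fun t => t * f t) s μ)
    (h2 : IntegrableOn (fun t => t ^ 2 * f t) s μ) :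
    (∫ t in s, t * f t ∂μ) ^ 2 < (∫ t in s, f t ∂μ) * ∫ t in s, t ^ 2 * f t ∂μ := by
  have : NeZero (μ.restrict s) := ⟨by simpa [Measure.restrict_eq_zero] using hμs⟩
  have hf_ae : ∀ᵐ t ∂μ.restrict s, 0 < f t := (ae_restrict_iff' hs).mpr (ae_of_all _ hf)
  set M₀ := ∫ t in s, f t ∂μ
  set M₁ := ∫ t in s, t * f t ∂μ
  set M₂ := ∫ t in s, t ^ 2 * f t ∂μ
  have hM₀ : 0 < M₀ := integral_pos_of_ae_pos h0 hf_ae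
  set c := M₁ / M₀
  have hexpand : (fun t => (t - c) ^ 2 * f t)
      = fun t => (t ^ 2 * f t - 2 * c * (t * f t)) + c ^ 2 * f t := by
    ext t; ring
  have hint₁ := h1.const_mul (2 * c)
  have hint₂ : IntegrableOn (fun t => t ^ 2 * f t - 2 * c * (t * f t)) s μ := h2.sub hint₁
  have hvar : 0 < ∫ t in s, (t - c) ^ 2 * f t ∂μ := by
    refine integral_pos_of_ae_pos (hexpand ▸ hint₂.add (h0.const_mul _)) ?_
    filter_upwards [hf_ae, ae_restrict_of_ae (μ.ae_ne c)] with t hft htc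
    have : 0 < (t - c) ^ 2 := by positivity [sub_ne_zero.mpr htc]
    positivity
  rw [hexpand, integral_add hint₂ (h0.const_mul _), integral_sub h2 hint₁,
    integral_const_mul, integral_const_mul] at hvar
  have hc : c * M₀ = M₁ := div_mul_cancel₀ _ hM₀.ne'
  nlinarith [mul_pos hM₀ hvar]

theorem integrableOn_rpow_mul_exp_neg_sq_half_sub_mul {b : ℝ} (hb : -1 < b) (x : ℝ) :
    IntegrableOn (fun t : ℝ => t ^ b * exp (-t ^ 2 / 2 - x * t)) (Ioi 0) := by
  refine ((integrableOn_rpow_mul_exp_neg_mul_sq (b := 1 / 4) (by norm_num) hb).const_mul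
    (exp (x ^ 2))).mono' ?_ ?_
  · refine ContinuousOn.aestronglyMeasurable (fun t ht => ?_) measurableSet_Ioi
    exact ((continuousAt_rpow_const t b (Or.inl (ne_of_gt ht))).mul
      (by fun_prop)).continuousWithinAt
  · filter_upwards [self_mem_ae_restrict measurableSet_Ioi] with t (ht : 0 < t)
    have hexp : exp (-t ^ 2 / 2 - x * t) ≤ exp (x ^ 2) * exp (-(1 / 4) * t ^ 2) := by
      rw [← exp_add, exp_le_exp]
      nlinarith [sq_nonneg (t / 2 + x)]
    rw [norm_of_nonneg (by positivity)]
    calc t ^ b * exp (-t ^ 2 / 2 - x * t)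
        ≤ t ^ b * (exp (x ^ 2) * exp (-(1 / 4) * t ^ 2)) := by gcongr
      _ = exp (x ^ 2) * (t ^ b * exp (-(1 / 4) * t ^ 2)) := by ring

theorem G_sub_natCast (ν x : ℝ) (n : ℕ) :
    G (ν - n) x = ∫ t in Ioi 0, t ^ n * (t ^ (-ν - 1) * exp (-t ^ 2 / 2 - x * t)) := by
  refine setIntegral_congr_fun measurableSet_Ioi fun t (ht : 0 < t) => ?_
  rw [show -(ν - n) - 1 = -ν - 1 + n by ring, rpow_add_natCast ht.ne']
  ring

theorem integrableOn_pow_mul_rpow_mul_exp {b : ℝ} (hb : -1 < b) (x : ℝ) (n : ℕ) :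
    IntegrableOn (fun t : ℝ => t ^ n * (t ^ b * exp (-t ^ 2 / 2 - x * t))) (Ioi 0) := by
  have hbn : -1 < b + n := by linarith [n.cast_nonneg (α := ℝ)]
  refine (integrableOn_rpow_mul_exp_neg_sq_half_sub_mul hbn x).congr_fun
    (fun t (ht : 0 < t) => ?_) measurableSet_Ioi
  simp only [rpow_add_natCast ht.ne']
  ring

theorem Gamma_neg_sub_one {ν : ℝ} (hν : ν ≠ 0) : Gamma (-(ν - 1)) = -ν * Gamma (-ν) := by
  rw [neg_sub', sub_neg_eq_add, Gamma_add_one (neg_ne_zero.mpr hν)]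

theorem Gamma_neg_sub_two {ν : ℝ} (hν : ν ≠ 0) (hν₁ : ν ≠ 1) :
    Gamma (-(ν - 2)) = (1 - ν) * (-ν * Gamma (-ν)) := by
  rw [show ν - 2 = ν - 1 - 1 by ring, Gamma_neg_sub_one (sub_ne_zero.mpr hν₁),
    Gamma_neg_sub_one hν, neg_sub]

theorem sq_G_sub_one_lt {ν : ℝ} (hν : ν < 0) (x : ℝ) :
    G (ν - 1) x ^ 2 < G ν x * G (ν - 2) x := by
  have hb : -1 < -ν - 1 := by linarith
  have hG₁ : G (ν - 1) x = ∫ t in Ioi 0, t * (t ^ (-ν - 1) * exp (-t ^ 2 / 2 - x * t)) := by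
    simpa using G_sub_natCast ν x 1
  have hG₂ : G (ν - 2) x = ∫ t in Ioi 0, t ^ 2 * (t ^ (-ν - 1) * exp (-t ^ 2 / 2 - x * t)) := by
    simpa using G_sub_natCast ν x 2
  rw [hG₁, hG₂]
  exact sq_setIntegral_mul_lt measurableSet_Ioi (by simp) (fun t (ht : 0 < t) => by positivity)
    (by simpa using integrableOn_pow_mul_rpow_mul_exp hb x 0)
    (by simpa using integrableOn_pow_mul_rpow_mul_exp hb x 1)
    (integrableOn_pow_mul_rpow_mul_exp hb x 2)

theorem stmt5 (ν : ℝ) (hν : ν < 0) (x : ℝ) :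
    (D (ν - 1) x) ^ 2 < ((ν - 1) / ν) * (D ν x * D (ν - 2) x) := by
  have hΓ : 0 < Gamma (-ν) := Gamma_pos_of_pos (neg_pos.mpr hν)
  have hfactor : (ν - 1) / ν * (D ν x * D (ν - 2) x) - D (ν - 1) x ^ 2
      = (exp (-x ^ 2 / 4) / (ν * Gamma (-ν))) ^ 2
        * (G ν x * G (ν - 2) x - G (ν - 1) x ^ 2) := by
    have hν₁ : 1 - ν ≠ 0 := by linarith
    simp only [D, Gamma_neg_sub_one hν.ne, Gamma_neg_sub_two hν.ne (by linarith)]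
    field_simp
    ring
  have hscale : exp (-x ^ 2 / 4) / (ν * Gamma (-ν)) ≠ 0 :=
    div_ne_zero (exp_pos _).ne' (mul_ne_zero hν.ne hΓ.ne')
  rw [← sub_pos, hfactor]
  exact mul_pos (sq_pos_of_ne_zero hscale) (sub_pos.mpr (sq_G_sub_one_lt hν x))
end

section
/- For every ν < 0 and every real x, the Turán-type strict inequality D_{ν−1}(x)² > D_ν(x) · D_{ν−2}(x) holds. -/
/-!
Write `I(b) = ∫₀^∞ t^b e^{-t²/2 - xt} dt`, so that `D_ν(x) = e^{-x²/4} I(-ν-1) / Γ(-ν)`.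
Integrating `d/dt (t^a e^{-t²/2 - xt})` gives `I(a+1) + x I(a) = a I(a-1)` for `a > 0`, and using
this at `a` and `a + 1` yields
`a I(a-1) I(a+1) - (a+1) I(a)² = I(a+1)² - I(a) I(a+2)`.
The right side is negative because `c ↦ ∫₀^∞ t^b (t - c)² e^{-t²/2 - xt} dt` is a positive
quadratic, so its discriminant is negative. Finally `Γ(a+1) = a Γ(a)` turns
`a I(a-1) I(a+1) < (a+1) I(a)²` at `a = -ν` into the inequality for `D`.
-/

open MeasureTheory Real Filter

open Set Topology

noncomputable def gaussMoment (b x : ℝ) : ℝ :=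
  ∫ t in Ioi (0:ℝ), t ^ b * exp (-t ^ 2 / 2 - x * t)

lemma G_eq_gaussMoment (ν x : ℝ) : G ν x = gaussMoment (-ν - 1) x := rfl

lemma exp_gauss_le (x t : ℝ) : exp (-t ^ 2 / 2 - x * t) ≤ exp ((1 - x) ^ 2 / 2) * exp (-t) := by
  rw [← exp_add]
  exact exp_le_exp.2 (by nlinarith [sq_nonneg (t + x - 1)])

lemma rpow_mul_exp_gauss_le {b t : ℝ} (x : ℝ) (ht : 0 < t) :
    t ^ b * exp (-t ^ 2 / 2 - x * t) ≤ exp ((1 - x) ^ 2 / 2) * (t ^ b * exp (-1 * t)) := by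
  rw [neg_one_mul, mul_left_comm]
  exact mul_le_mul_of_nonneg_left (exp_gauss_le x t) (rpow_nonneg ht.le b)

lemma integrableOn_rpow_mul_exp_gauss {b : ℝ} (x : ℝ) (hb : -1 < b) :
    IntegrableOn (fun t : ℝ => t ^ b * exp (-t ^ 2 / 2 - x * t)) (Ioi 0) := by
  have hGamma : IntegrableOn (fun t : ℝ => exp ((1 - x) ^ 2 / 2) * (t ^ b * exp (-1 * t)))
      (Ioi 0) := by
    refine IntegrableOn.congr_fun ((GammaIntegral_convergent (s := b + 1) (by linarith)).const_mul
      (exp ((1 - x) ^ 2 / 2))) (fun t _ => ?_) measurableSet_Ioi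
    simp only [add_sub_cancel_right, neg_one_mul, mul_comm (exp (-t))]
  refine hGamma.mono' (by fun_prop) ?_
  filter_upwards [ae_restrict_mem measurableSet_Ioi] with t (ht : 0 < t)
  rw [norm_of_nonneg (by positivity)]
  exact rpow_mul_exp_gauss_le x ht

lemma setIntegral_pos_of_ae_pos {α : Type*} [MeasurableSpace α] {μ : Measure α} {s : Set α}
    {f : α → ℝ} (hs : μ s ≠ 0) (hf : IntegrableOn f s μ) (hpos : ∀ᵐ t ∂μ.restrict s, 0 < f t) :
    0 < ∫ t in s, f t ∂μ := by
  rw [integral_pos_iff_support_of_nonneg_ae (hpos.mono fun _ h => h.le) hf]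
  calc 0 < μ.restrict s univ := by simpa using pos_iff_ne_zero.2 hs
    _ ≤ μ.restrict s (Function.support f) := measure_mono_ae (hpos.mono fun t ht _ => ht.ne')

lemma gaussMoment_pos {b : ℝ} (x : ℝ) (hb : -1 < b) : 0 < gaussMoment b x := by
  refine setIntegral_pos_of_ae_pos (by simp) (integrableOn_rpow_mul_exp_gauss x hb) ?_
  filter_upwards [ae_restrict_mem measurableSet_Ioi] with t (ht : 0 < t)
  positivity

lemma tendsto_rpow_mul_exp_gauss_atTop (a x : ℝ) :
    Tendsto (fun t : ℝ => t ^ a * exp (-t ^ 2 / 2 - x * t)) atTop (𝓝 0) := by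
  refine squeeze_zero' ?_ ?_ ((tendsto_rpow_mul_exp_neg_mul_atTop_nhds_zero a 1 one_pos).const_mul
    (exp ((1 - x) ^ 2 / 2)) |>.trans_eq (by rw [mul_zero]))
  · filter_upwards [eventually_gt_atTop 0] with t ht
    positivity
  · filter_upwards [eventually_gt_atTop 0] with t ht
    exact rpow_mul_exp_gauss_le x ht

lemma hasDerivAt_rpow_mul_exp_gauss {t : ℝ} (a x : ℝ) (ht : 0 < t) :
    HasDerivAt (fun s : ℝ => s ^ a * exp (-s ^ 2 / 2 - x * s))
      (a * (t ^ (a - 1) * exp (-t ^ 2 / 2 - x * t)) - t ^ (a + 1) * exp (-t ^ 2 / 2 - x * t)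
        - x * (t ^ a * exp (-t ^ 2 / 2 - x * t))) t := by
  have hexponent : HasDerivAt (fun s : ℝ => -s ^ 2 / 2 - x * s) (-t - x) t := by
    refine ((((hasDerivAt_pow 2 t).neg).div_const 2).sub
      ((hasDerivAt_id' t).const_mul x)).congr_deriv ?_
    simp only [Nat.cast_ofNat, Nat.add_one_sub_one, pow_one, mul_one]
    ring
  refine ((hasDerivAt_rpow_const (p := a) (Or.inl ht.ne')).mul hexponent.exp).congr_deriv ?_
  rw [rpow_add ht, rpow_one]
  ring

lemma gaussMoment_recurrence {a : ℝ} (x : ℝ) (ha : 0 < a) :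
    gaussMoment (a + 1) x + x * gaussMoment a x = a * gaussMoment (a - 1) x := by
  have iₘ := (integrableOn_rpow_mul_exp_gauss x (b := a - 1) (by linarith)).const_mul a
  have iₚ := integrableOn_rpow_mul_exp_gauss x (b := a + 1) (by linarith)
  have i₀ := (integrableOn_rpow_mul_exp_gauss x (b := a) (by linarith)).const_mul x
  have hFTC := integral_Ioi_of_hasDerivAt_of_tendsto
    (f := fun s : ℝ => s ^ a * exp (-s ^ 2 / 2 - x * s))
    ((continuousAt_rpow_const 0 a (Or.inr ha.le)).mul (by fun_prop)).continuousWithinAt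
    (fun t ht => hasDerivAt_rpow_mul_exp_gauss a x ht) ((iₘ.sub iₚ).sub i₀)
    (tendsto_rpow_mul_exp_gauss_atTop a x)
  rw [integral_sub (by exact iₘ.sub iₚ) i₀, integral_sub iₘ iₚ, integral_const_mul,
    integral_const_mul, zero_rpow ha.ne'] at hFTC
  simp only [gaussMoment]
  linarith

/-- The left-hand side is `∫ t in Ioi 0, t ^ b * (t - c) ^ 2 * exp (-t ^ 2 / 2 - x * t)`. -/
lemma gaussMoment_quadratic_pos {b : ℝ} (x : ℝ) (hb : -1 < b) (c : ℝ) :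
    0 < gaussMoment b x * (c * c) + -2 * gaussMoment (b + 1) x * c + gaussMoment (b + 2) x := by
  have i₀ := (integrableOn_rpow_mul_exp_gauss x hb).const_mul (c * c)
  have i₁ := (integrableOn_rpow_mul_exp_gauss x (b := b + 1) (by linarith)).const_mul (-2 * c)
  have i₂ := integrableOn_rpow_mul_exp_gauss x (b := b + 2) (by linarith)
  have hpos : 0 < ∫ t in Ioi (0:ℝ), c * c * (t ^ b * exp (-t ^ 2 / 2 - x * t))
        + -2 * c * (t ^ (b + 1) * exp (-t ^ 2 / 2 - x * t))
        + t ^ (b + 2) * exp (-t ^ 2 / 2 - x * t) := by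
    refine setIntegral_pos_of_ae_pos (by simp) ((i₀.add i₁).add i₂) ?_
    filter_upwards [ae_restrict_mem measurableSet_Ioi,
      ae_restrict_of_ae (compl_mem_ae_iff.2 (measure_singleton c))] with t (ht : 0 < t) htc
    have hsq : 0 < (t - c) ^ 2 := sq_pos_of_ne_zero (sub_ne_zero.2 htc)
    calc (0:ℝ) < t ^ b * exp (-t ^ 2 / 2 - x * t) * (t - c) ^ 2 := by positivity
      _ = _ := by rw [rpow_add ht, rpow_add ht, rpow_one, rpow_two]; ring
  rw [integral_add (by exact i₀.add i₁) i₂, integral_add i₀ i₁, integral_const_mul,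
    integral_const_mul] at hpos
  simp only [gaussMoment]
  linarith

lemma sq_gaussMoment_lt {b : ℝ} (x : ℝ) (hb : -1 < b) :
    gaussMoment (b + 1) x ^ 2 < gaussMoment b x * gaussMoment (b + 2) x := by
  have := discrim_lt_zero (gaussMoment_pos x hb).ne' (gaussMoment_quadratic_pos x hb)
  rw [discrim] at this
  linarith

lemma gaussMoment_turan {a : ℝ} (x : ℝ) (ha : 0 < a) :
    a * (gaussMoment (a - 1) x * gaussMoment (a + 1) x) < (a + 1) * gaussMoment a x ^ 2 := by
  have h₀ := gaussMoment_recurrence x ha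
  have h₁ := gaussMoment_recurrence x (a := a + 1) (by linarith)
  have hlt := sq_gaussMoment_lt x (b := a) (by linarith)
  rw [add_sub_cancel_right, add_assoc, one_add_one_eq_two] at h₁
  linear_combination hlt - gaussMoment (a + 1) x * h₀ + gaussMoment a x * h₁

lemma G_turan {ν : ℝ} (x : ℝ) (hν : ν < 0) :
    -ν * (G ν x * G (ν - 2) x) < (1 - ν) * G (ν - 1) x ^ 2 := by
  rw [G_eq_gaussMoment, G_eq_gaussMoment, G_eq_gaussMoment, show -(ν - 1) - 1 = -ν by ring,
    show -(ν - 2) - 1 = -ν + 1 by ring, sub_eq_neg_add 1]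
  exact gaussMoment_turan x (neg_pos.2 hν)

theorem stmt6 (ν : ℝ) (hν : ν < 0) (x : ℝ) :
    D ν x * D (ν - 2) x < (D (ν - 1) x) ^ 2 := by
  have hΓ : 0 < Gamma (-ν) := Gamma_pos_of_pos (neg_pos.2 hν)
  have hΓ₁ : Gamma (1 - ν) = -ν * Gamma (-ν) := by
    rw [← Gamma_add_one (neg_ne_zero.2 hν.ne)]
    ring_nf
  have hΓ₂ : Gamma (2 - ν) = (1 - ν) * Gamma (1 - ν) := by
    rw [← Gamma_add_one (by linarith)]
    ring_nf
  have hν₀ : ν ≠ 0 := hν.ne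
  have hν₁ : 1 - ν ≠ 0 := by linarith
  have hK : 0 < exp (-x ^ 2 / 4) ^ 2 / (ν ^ 2 * (1 - ν) * Gamma (-ν) ^ 2) :=
    div_pos (by positivity) (mul_pos (mul_pos (sq_pos_of_ne_zero hν₀) (by linarith))
      (pow_pos hΓ 2))
  calc D ν x * D (ν - 2) x
      = exp (-x ^ 2 / 4) ^ 2 / (ν ^ 2 * (1 - ν) * Gamma (-ν) ^ 2)
        * (-ν * (G ν x * G (ν - 2) x)) := by
        simp only [D, neg_sub, hΓ₂, hΓ₁]
        field_simp
    _ < exp (-x ^ 2 / 4) ^ 2 / (ν ^ 2 * (1 - ν) * Gamma (-ν) ^ 2)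
        * ((1 - ν) * G (ν - 1) x ^ 2) := mul_lt_mul_of_pos_left (G_turan x hν) hK
    _ = D (ν - 1) x ^ 2 := by
        simp only [D, neg_sub, hΓ₁]
        field_simp
end

section
/- For every ν < 0, lim_{x → −∞} D_{ν−1}(x)² / (D_ν(x) · D_{ν−2}(x)) = (ν−1)/ν. -/
open MeasureTheory Real Filter

/-!
Substituting `t = s + u` in `G μ (-s)` gives `G μ (-s) = exp (s²/2) s^α J α s` with `α = -μ - 1`,
where `J α s = ∫_{u > -s} (1 + u/s)^α e^{-u²/2} du` tends to `√(2π)` as `s → ∞` whenever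
`α > -1`. On `u > -s/2` this is dominated convergence with the Gaussian bound
`(1 + u/s)^α e^{-u²/2} ≤ C e^{-u²/4}`; on `(-s, -s/2]` the integrable singularity of
`(1 + u/s)^α` costs a factor `s`, which `e^{-s²/8}` kills. Hence, as `x = -s → -∞`, the ratio
`D_{ν-1}² / (D_ν D_{ν-2})` differs from `Γ(-ν) Γ(2-ν) / Γ(1-ν)² = (ν - 1)/ν` by the factor
`J(-ν)² / (J(-ν-1) J(1-ν)) → 1`: the exponentials and the powers of `s` cancel exactly.
-/

open Set Topology

lemma one_add_div_pos {s u : ℝ} (hs : 0 < s) (hu : -s < u) : 0 < 1 + u / s := by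
  have : -1 < u / s := by rw [lt_div_iff₀ hs]; linarith
  linarith

lemma integral_exp_neg_sq_div_two : ∫ u : ℝ, exp (-u ^ 2 / 2) = √(2 * π) := by
  convert integral_gaussian (1 / 2) using 2 <;> ring_nf

section Tail

lemma intervalIntegrable_one_add_div_rpow {α s : ℝ} (hα : -1 < α) (hs : 0 < s) :
    IntervalIntegrable (fun u => (1 + u / s) ^ α) volume (-s) (-s / 2) := by
  have h := ((intervalIntegral.intervalIntegrable_rpow' hα (a := 0) (b := 1 / 2)).comp_add_right
    1).comp_mul_left (c := s⁻¹)
  convert h using 1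
  · ext u; rw [add_comm, div_eq_inv_mul]
  · field_simp; ring
  · field_simp; ring

lemma integral_one_add_div_rpow {α s : ℝ} (hs : 0 < s) :
    ∫ u in -s..-s / 2, (1 + u / s) ^ α = s * ∫ x in (0 : ℝ)..1 / 2, x ^ α := by
  have h := intervalIntegral.integral_comp_mul_add (fun x => x ^ α) (inv_ne_zero hs.ne') 1
    (a := -s) (b := -s / 2)
  simp only [inv_inv, smul_eq_mul] at h
  convert h using 3
  · rw [add_comm, div_eq_inv_mul]
  · field_simp; ring
  · field_simp; ring

lemma integrableOn_Ioc_one_add_div_rpow_mul_exp {α s : ℝ} (hα : -1 < α) (hs : 0 < s) :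
    IntegrableOn (fun u => (1 + u / s) ^ α * exp (-u ^ 2 / 2)) (Ioc (-s) (-s / 2)) := by
  refine ((intervalIntegrable_iff_integrableOn_Ioc_of_le (by linarith)).1
    (intervalIntegrable_one_add_div_rpow hα hs)).mul_bdd (c := 1) (by fun_prop) ?_
  exact .of_forall fun u => by
    rw [norm_of_nonneg (exp_pos _).le, exp_le_one_iff]
    nlinarith [sq_nonneg u]

lemma tendsto_mul_exp_neg_sq_div_eight :
    Tendsto (fun s : ℝ => s * exp (-s ^ 2 / 8)) atTop (𝓝 0) := by
  have h := tendsto_pow_mul_exp_neg_atTop_nhds_zero 1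
  simp only [pow_one] at h
  refine tendsto_of_tendsto_of_tendsto_of_le_of_le' tendsto_const_nhds h ?_ ?_
  · filter_upwards [eventually_ge_atTop 0] with s hs using by positivity
  · filter_upwards [eventually_ge_atTop 8] with s hs
    gcongr
    nlinarith

lemma tendsto_setIntegral_Ioc_neg_half {α : ℝ} (hα : -1 < α) :
    Tendsto (fun s => ∫ u in Ioc (-s) (-s / 2), (1 + u / s) ^ α * exp (-u ^ 2 / 2))
      atTop (𝓝 0) := by
  have hupper := tendsto_mul_exp_neg_sq_div_eight.const_mul (∫ x in (0 : ℝ)..1 / 2, x ^ α)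
  rw [mul_zero] at hupper
  refine tendsto_of_tendsto_of_tendsto_of_le_of_le' tendsto_const_nhds hupper ?_ ?_
  · filter_upwards [eventually_gt_atTop 0] with s hs
    refine setIntegral_nonneg measurableSet_Ioc fun u hu => ?_
    have := one_add_div_pos hs hu.1
    positivity
  · filter_upwards [eventually_gt_atTop 0] with s hs
    have hint := (intervalIntegrable_iff_integrableOn_Ioc_of_le (by linarith)).1
      (intervalIntegrable_one_add_div_rpow hα hs)
    calc ∫ u in Ioc (-s) (-s / 2), (1 + u / s) ^ α * exp (-u ^ 2 / 2)
        ≤ ∫ u in Ioc (-s) (-s / 2), (1 + u / s) ^ α * exp (-s ^ 2 / 8) := by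
          refine setIntegral_mono_on (integrableOn_Ioc_one_add_div_rpow_mul_exp hα hs)
            (hint.mul_const _) measurableSet_Ioc fun u hu => ?_
          have := one_add_div_pos hs hu.1
          exact mul_le_mul_of_nonneg_left (exp_le_exp.2 (by nlinarith [hu.2])) (by positivity)
      _ = (∫ x in (0 : ℝ)..1 / 2, x ^ α) * (s * exp (-s ^ 2 / 8)) := by
          rw [integral_mul_const, ← intervalIntegral.integral_of_le (by linarith),
            integral_one_add_div_rpow hs]
          ring

end Tail

section Bulk

lemma abs_log_le_abs_add_one {b u : ℝ} (hb : 1 / 2 < b) (hbu : b ≤ 1 + |u|) :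
    |log b| ≤ |u| + 1 := by
  have hb0 : 0 < b := by linarith
  have hlower : 1 - b⁻¹ ≤ log b := one_sub_inv_le_log_of_pos hb0
  have hupper : log b ≤ b - 1 := log_le_sub_one_of_pos hb0
  have hinv : b⁻¹ < 2 := by rw [inv_lt_comm₀ hb0 two_pos]; linarith
  rw [abs_le]
  constructor <;> linarith [abs_nonneg u]

lemma rpow_mul_exp_neg_sq_le {α b u : ℝ} (hb : 1 / 2 < b) (hbu : b ≤ 1 + |u|) :
    b ^ α * exp (-u ^ 2 / 2) ≤ exp (|α| + α ^ 2) * exp (-(1 / 4) * u ^ 2) := by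
  rw [rpow_def_of_pos (by linarith), ← exp_add, ← exp_add, exp_le_exp]
  have hlog : log b * α ≤ |α| * (|u| + 1) := by
    calc log b * α ≤ |log b * α| := le_abs_self _
      _ = |α| * |log b| := by rw [abs_mul, mul_comm]
      _ ≤ |α| * (|u| + 1) := by gcongr; exact abs_log_le_abs_add_one hb hbu
  nlinarith [sq_nonneg (|α| - |u| / 2), sq_abs u, sq_abs α]

lemma one_add_div_rpow_mul_exp_le {α s u : ℝ} (hs : 1 ≤ s) (hu : -s / 2 < u) :
    (1 + u / s) ^ α * exp (-u ^ 2 / 2) ≤ exp (|α| + α ^ 2) * exp (-(1 / 4) * u ^ 2) := by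
  have hs0 : 0 < s := by linarith
  refine rpow_mul_exp_neg_sq_le ?_ ?_
  · have : -1 / 2 < u / s := by rw [lt_div_iff₀ hs0]; linarith
    linarith
  · have : u / s ≤ |u| :=
      calc u / s ≤ |u| / s := by gcongr; exact le_abs_self u
        _ ≤ |u| := div_le_self (abs_nonneg u) hs
    linarith

lemma integrable_exp_add_sq_mul_exp_neg_sq (α : ℝ) :
    Integrable fun u : ℝ => exp (|α| + α ^ 2) * exp (-(1 / 4) * u ^ 2) :=
  (integrable_exp_neg_mul_sq (by norm_num)).const_mul _

lemma integrableOn_Ioi_one_add_div_rpow_mul_exp {α s : ℝ} (hs : 1 ≤ s) :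
    IntegrableOn (fun u => (1 + u / s) ^ α * exp (-u ^ 2 / 2)) (Ioi (-s / 2)) := by
  refine (integrable_exp_add_sq_mul_exp_neg_sq α).integrableOn.mono' (by fun_prop)
    (ae_restrict_of_forall_mem measurableSet_Ioi fun u hu => ?_)
  have := one_add_div_pos (by linarith) (show -s < u by linarith [mem_Ioi.1 hu])
  rw [norm_of_nonneg (by positivity)]
  exact one_add_div_rpow_mul_exp_le hs hu

lemma tendsto_setIntegral_Ioi_neg_half (α : ℝ) :
    Tendsto (fun s => ∫ u in Ioi (-s / 2), (1 + u / s) ^ α * exp (-u ^ 2 / 2))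
      atTop (𝓝 (∫ u, exp (-u ^ 2 / 2))) := by
  simp_rw [← integral_indicator measurableSet_Ioi]
  refine tendsto_integral_filter_of_dominated_convergence _
    (.of_forall fun s => (Measurable.indicator (by fun_prop) measurableSet_Ioi).aestronglyMeasurable)
    ?_ (integrable_exp_add_sq_mul_exp_neg_sq α) (.of_forall fun u => ?_)
  · filter_upwards [eventually_ge_atTop 1] with s hs
    refine .of_forall fun u => ?_
    rw [norm_indicator_eq_indicator_norm]
    refine indicator_le' (g := fun u => exp (|α| + α ^ 2) * exp (-(1 / 4) * u ^ 2))
      (fun u hu => ?_) (fun _ _ => by positivity) u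
    have := one_add_div_pos (by linarith) (show -s < u by linarith [mem_Ioi.1 hu])
    rw [norm_of_nonneg (by positivity)]
    exact one_add_div_rpow_mul_exp_le hs hu
  · have hbase : Tendsto (fun s => 1 + u / s) atTop (𝓝 1) := by
      simpa using tendsto_const_nhds.add ((tendsto_const_nhds (x := u)).div_atTop tendsto_id)
    have hlim := (hbase.rpow_const (Or.inl one_ne_zero) (p := α)).mul_const (exp (-u ^ 2 / 2))
    rw [one_rpow, one_mul] at hlim
    refine hlim.congr' ?_
    filter_upwards [eventually_gt_atTop (-2 * u)] with s hs
    rw [indicator_of_mem (by rw [mem_Ioi]; linarith)]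

end Bulk

noncomputable def J (α s : ℝ) : ℝ := ∫ u in Ioi (-s), (1 + u / s) ^ α * exp (-u ^ 2 / 2)

lemma tendsto_J {α : ℝ} (hα : -1 < α) : Tendsto (J α) atTop (𝓝 √(2 * π)) := by
  rw [← integral_exp_neg_sq_div_two, ← zero_add (∫ u : ℝ, _)]
  refine ((tendsto_setIntegral_Ioc_neg_half hα).add
    (tendsto_setIntegral_Ioi_neg_half α)).congr' ?_
  filter_upwards [eventually_ge_atTop 1] with s hs
  rw [J, ← Ioc_union_Ioi_eq_Ioi (by linarith : -s ≤ -s / 2),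
    setIntegral_union (Ioc_disjoint_Ioi le_rfl) measurableSet_Ioi
      (integrableOn_Ioc_one_add_div_rpow_mul_exp hα (by linarith))
      (integrableOn_Ioi_one_add_div_rpow_mul_exp hs)]

lemma G_neg_eq {s : ℝ} (μ : ℝ) (hs : 0 < s) :
    G μ (-s) = exp (s ^ 2 / 2) * s ^ (-μ - 1) * J (-μ - 1) s := by
  have hshift : G μ (-s) =
      ∫ u in Ioi (-s), (u + s) ^ (-μ - 1) * exp (-(u + s) ^ 2 / 2 + s * (u + s)) := by
    rw [G, ← (measurePreserving_add_right volume s).setIntegral_preimage_emb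
      (measurableEmbedding_addRight s), preimage_add_const_Ioi, zero_sub]
    simp only [neg_mul, sub_neg_eq_add]
  rw [hshift, J, ← integral_const_mul]
  refine setIntegral_congr_fun measurableSet_Ioi fun u hu => ?_
  have hsplit : u + s = s * (1 + u / s) := by field_simp; ring
  rw [hsplit, mul_rpow hs.le (one_add_div_pos hs hu).le,
    show -(s * (1 + u / s)) ^ 2 / 2 + s * (s * (1 + u / s)) = s ^ 2 / 2 + -u ^ 2 / 2 by
      field_simp; ring,
    exp_add]
  ring

lemma D_neg_eq {s : ℝ} (μ : ℝ) (hs : 0 < s) :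
    D μ (-s) = exp (s ^ 2 / 4) * s ^ (-μ - 1) / Gamma (-μ) * J (-μ - 1) s := by
  rw [D, G_neg_eq μ hs, neg_sq, show s ^ 2 / 2 = s ^ 2 / 4 + s ^ 2 / 4 by ring, exp_add,
    neg_div, exp_neg]
  field_simp

lemma D_ratio_neg_eq (ν : ℝ) {s : ℝ} (hs : 0 < s) :
    D (ν - 1) (-s) ^ 2 / (D ν (-s) * D (ν - 2) (-s)) =
      Gamma (-ν) * Gamma (-ν + 2) / Gamma (-ν + 1) ^ 2 *
        (J (-(ν - 1) - 1) s ^ 2 / (J (-ν - 1) s * J (-(ν - 2) - 1) s)) := by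
  simp only [D_neg_eq _ hs, mul_pow, mul_mul_mul_comm _ (J _ s), mul_div_mul_comm]
  congr 1
  have hpow : (s ^ (-(ν - 1) - 1)) ^ 2 = s ^ (-ν - 1) * s ^ (-(ν - 2) - 1) := by
    rw [← rpow_add hs, ← rpow_natCast, ← rpow_mul hs.le]
    ring_nf
  rw [div_pow, mul_pow, hpow, show -(ν - 1) = -ν + 1 by ring, show -(ν - 2) = -ν + 2 by ring]
  field_simp

lemma Gamma_mul_Gamma_add_two_div_sq {a : ℝ} (ha : 0 < a) :
    Gamma a * Gamma (a + 2) / Gamma (a + 1) ^ 2 = (a + 1) / a := by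
  have hΓ := (Gamma_pos_of_pos ha).ne'
  rw [show a + 2 = (a + 1) + 1 by ring, Gamma_add_one (by linarith), Gamma_add_one ha.ne']
  field_simp

theorem stmt10 (ν : ℝ) (hν : ν < 0) :
    Filter.Tendsto (fun x : ℝ => (D (ν - 1) x) ^ 2 / (D ν x * D (ν - 2) x))
      Filter.atBot (nhds ((ν - 1) / ν)) := by
  have hc : √(2 * π) ≠ 0 := by positivity
  have hJ : Tendsto (fun s => J (-(ν - 1) - 1) s ^ 2 / (J (-ν - 1) s * J (-(ν - 2) - 1) s))
      atTop (𝓝 1) := by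
    have h := ((tendsto_J (α := -(ν - 1) - 1) (by linarith)).pow 2).div
      ((tendsto_J (α := -ν - 1) (by linarith)).mul (tendsto_J (α := -(ν - 2) - 1) (by linarith)))
      (mul_ne_zero hc hc)
    rwa [sq, div_self (mul_ne_zero hc hc)] at h
  have hΓ : Gamma (-ν) * Gamma (-ν + 2) / Gamma (-ν + 1) ^ 2 = (ν - 1) / ν := by
    rw [Gamma_mul_Gamma_add_two_div_sq (neg_pos.2 hν)]
    field_simp
    ring
  have hlim : Tendsto (fun s => D (ν - 1) (-s) ^ 2 / (D ν (-s) * D (ν - 2) (-s)))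
      atTop (𝓝 ((ν - 1) / ν)) := by
    rw [← hΓ, ← mul_one (_ / _)]
    refine (hJ.const_mul _).congr' ?_
    filter_upwards [eventually_gt_atTop 0] with s hs using (D_ratio_neg_eq ν hs).symm
  simpa only [Function.comp_def, neg_neg] using hlim.comp tendsto_neg_atBot_atTop
end

section
/- For every ν < 0, the function ψ(x) := e^{(x−μ)²/(2σ²)} · D_ν((μ−x)√2/σ) (for fixed μ ∈ ℝ, σ > 0) is strictly increasing and strictly positive on ℝ. -/
open MeasureTheory Real Filter

lemma aux_meas (ν x : ℝ) :
    AEStronglyMeasurable (fun t : ℝ => t ^ (-ν - 1) * Real.exp (-t^2/2 - x*t))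
      (volume.restrict (Set.Ioi 0)) := by
  apply ContinuousOn.aestronglyMeasurable _ measurableSet_Ioi
  intro t ht
  have h1 : ContinuousWithinAt (fun t : ℝ => t ^ (-ν - 1)) (Set.Ioi 0) t :=
    (Real.continuousAt_rpow_const t _ (Or.inl (ne_of_gt ht))).continuousWithinAt
  exact h1.mul ((Real.continuous_exp.comp (by continuity)).continuousWithinAt)

lemma aux_integrable (ν x : ℝ) (hν : ν < 0) :
    IntegrableOn (fun t : ℝ => t ^ (-ν - 1) * Real.exp (-t^2/2 - x*t)) (Set.Ioi 0) := by
  have hb : IntegrableOn (fun t : ℝ => Real.exp (x^2) *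
      (t ^ (-ν - 1) * Real.exp (-(1/4) * t^2))) (Set.Ioi 0) :=
    (integrableOn_rpow_mul_exp_neg_mul_sq (by norm_num) (by linarith)).const_mul _
  apply Integrable.mono' hb (aux_meas ν x)
  filter_upwards [ae_restrict_mem measurableSet_Ioi] with t ht
  have ht0 : (0:ℝ) < t := ht
  have h1 : (0:ℝ) ≤ t ^ (-ν - 1) := Real.rpow_nonneg ht0.le _
  rw [Real.norm_eq_abs, abs_of_nonneg (mul_nonneg h1 (Real.exp_pos _).le)]
  rw [mul_comm (Real.exp (x^2)) _, mul_assoc]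
  apply mul_le_mul_of_nonneg_left _ h1
  rw [← Real.exp_add]
  apply Real.exp_le_exp.mpr
  nlinarith [sq_nonneg (x + t/2)]

lemma aux_pos (ν x : ℝ) (hν : ν < 0) : 0 < G ν x := by
  rw [G, setIntegral_pos_iff_support_of_nonneg_ae]
  · apply lt_of_lt_of_le _ (measure_mono (Set.subset_inter _ Set.Subset.rfl))
    · rw [Real.volume_Ioi]; exact ENNReal.zero_lt_top
    · intro t ht
      have ht0 : (0:ℝ) < t := ht
      exact ne_of_gt (mul_pos (Real.rpow_pos_of_pos ht0 _) (Real.exp_pos _))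
  · filter_upwards [ae_restrict_mem measurableSet_Ioi] with t ht
    exact mul_nonneg (Real.rpow_nonneg (le_of_lt ht) _) (Real.exp_pos _).le
  · exact aux_integrable ν x hν

lemma aux_anti (ν : ℝ) (hν : ν < 0) : StrictAnti (fun x => G ν x) := by
  intro x y hxy
  simp only
  have hsub : 0 < G ν x - G ν y := by
    rw [G, G, ← integral_sub (aux_integrable ν x hν) (aux_integrable ν y hν)]
    rw [setIntegral_pos_iff_support_of_nonneg_ae]
    · apply lt_of_lt_of_le _ (measure_mono (Set.subset_inter _ Set.Subset.rfl))
      · rw [Real.volume_Ioi]; exact ENNReal.zero_lt_top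
      · intro t ht
        have ht0 : (0:ℝ) < t := ht
        have : Real.exp (-t^2/2 - y*t) < Real.exp (-t^2/2 - x*t) := by
          apply Real.exp_lt_exp.mpr; nlinarith
        have h1 : (0:ℝ) < t ^ (-ν - 1) := Real.rpow_pos_of_pos ht0 _
        have : t ^ (-ν - 1) * Real.exp (-t^2/2 - x*t) -
            t ^ (-ν - 1) * Real.exp (-t^2/2 - y*t) > 0 := by nlinarith
        exact ne_of_gt this
    · filter_upwards [ae_restrict_mem measurableSet_Ioi] with t ht
      have ht0 : (0:ℝ) < t := ht
      have : Real.exp (-t^2/2 - y*t) ≤ Real.exp (-t^2/2 - x*t) := by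
        apply Real.exp_le_exp.mpr; nlinarith
      have h1 : (0:ℝ) ≤ t ^ (-ν - 1) := Real.rpow_nonneg ht0.le _
      show (0:ℝ) ≤ t ^ (-ν - 1) * Real.exp (-t^2/2 - x*t) -
            t ^ (-ν - 1) * Real.exp (-t^2/2 - y*t)
      nlinarith
    · exact (aux_integrable ν x hν).sub (aux_integrable ν y hν)
  linarith

theorem stmt14 (ν : ℝ) (hν : ν < 0) (μ σ : ℝ) (hσ : 0 < σ) :
    StrictMono (fun x : ℝ =>
        Real.exp ((x - μ)^2 / (2 * σ^2)) * D ν ((μ - x) * Real.sqrt 2 / σ)) ∧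
      ∀ x : ℝ, 0 < Real.exp ((x - μ)^2 / (2 * σ^2)) * D ν ((μ - x) * Real.sqrt 2 / σ) := by
  have hΓ : 0 < Real.Gamma (-ν) := Real.Gamma_pos_of_pos (by linarith)
  have key : ∀ x : ℝ, Real.exp ((x - μ)^2 / (2 * σ^2)) * D ν ((μ - x) * Real.sqrt 2 / σ)
      = G ν ((μ - x) * Real.sqrt 2 / σ) / Real.Gamma (-ν) := by
    intro x
    rw [D]
    have hs : ((μ - x) * Real.sqrt 2 / σ)^2 = (x - μ)^2 * 2 / σ^2 := by
      rw [div_pow, mul_pow, Real.sq_sqrt (by norm_num : (0:ℝ) ≤ 2)]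
      ring
    have hA : -((μ - x) * Real.sqrt 2 / σ)^2/4 = -((x - μ)^2 / (2 * σ^2)) := by
      rw [hs]; field_simp; ring
    rw [hA, Real.exp_neg]
    have hpos := Real.exp_pos ((x - μ)^2 / (2 * σ^2))
    field_simp
  constructor
  · intro x y hxy
    simp only [key]
    rw [div_lt_div_iff_of_pos_right hΓ]
    apply aux_anti ν hν
    rw [div_lt_div_iff_of_pos_right hσ]
    have h2 : (0:ℝ) < Real.sqrt 2 := Real.sqrt_pos.mpr (by norm_num)
    exact mul_lt_mul_of_pos_right (by linarith) h2
  · intro x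
    rw [key]
    exact div_pos (aux_pos ν _ hν) hΓ
end
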